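/- arXiv:2402.02575 — 2 statements merged into one kernel-verified Lean document; each statement's English description precedes it below -/
import Mathlib

section
/- Let f : X → (V → Option (Fin p)) be any fiid partial labelling of the r-regular tree. Then for any two adjacent vertices u, v and any pair t = (d, c) with 1 ≤ d ≤ r and c ≤ p: μ({x : v remains in f(x), τ(x, v) = (d, c), and u remains in f(x)}) = (d / r) · μ({x : v remains in f(x) and τ(x, v) = (d, c)}). In particular, if μ({x : both u and v remain in f(x)}) > 0, then the conditional probability that τ(x, v) = (d, c) given that both u and v remain equals d · μ({x : v remains and τ(x,v) = (d,c)}) divided by Σ_{(d',c')} d' · μ({x : v remains and τ(x,v) = (d',c')}), the sum ranging over all pairs (d', c') with d' ≤ r and c' ≤ p. -/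
open MeasureTheory

/-- A vertex `v` *remains* in a partial labelling `ℓ` if it is uncolored. -/
def remains {V : Type} {p : ℕ} (ℓ : V → Option (Fin p)) (v : V) : Prop :=
  ℓ v = none

/-- The *type* of a vertex `v` in a partial labelling `ℓ` of a graph `G`: the pair
`(d, c)` where `d` is the number of uncolored neighbours of `v` and `c` is the number of
colors not seen by `v`. -/
noncomputable def typeOf {V : Type} {p : ℕ} (G : SimpleGraph V)
    (ℓ : V → Option (Fin p)) (v : V) : ℕ × ℕ :=
  ({u ∈ G.neighborSet v | ℓ u = none}.ncard,
   {i : Fin p | ∀ u ∈ G.neighborSet v, ℓ u ≠ some i}.ncard)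

/-- `Option (Fin p)` is a countable discrete space; give it the discrete σ-algebra. -/
instance {p : ℕ} : MeasurableSpace (Option (Fin p)) := ⊤

/-!
Fix a type `t` and, for each neighbour `w` of `v`, let `A_w` be the event that `v` remains with
type `t` and `w` remains. In a regular tree the stabiliser of `v` acts transitively on the
neighbours of `v`: an automorphism is built level by level from bijections between the children
of equidistant vertices. Since `μ` is invariant and `f` equivariant under automorphisms, all the
`μ(A_w)` are equal. On the event that `v` remains with type `t = (d, c)` exactly `d` of the `r`
neighbours of `v` remain, so `∑_w μ(A_w) = d · μ(v remains with type t)`, i.e.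
`r · μ(A_u) = d · μ(v remains with type t)`. The conditional version follows by splitting the
event that `u` and `v` remain according to the type of `v`.
-/

namespace Set

variable {ι α : Type*} [Nonempty ι] {s : Set ι} {t₁ t₂ : Set α} {e₁ e₂ : ι → α}

lemma BijOn.mapsTo_comp_invFunOn (h₁ : BijOn e₁ s t₁) (h₂ : BijOn e₂ s t₂) :
    MapsTo (e₂ ∘ Function.invFunOn e₁ s) t₁ t₂ :=
  h₂.mapsTo.comp h₁.surjOn.mapsTo_invFunOn

lemma BijOn.leftInvOn_comp_invFunOn (h₁ : BijOn e₁ s t₁) (h₂ : BijOn e₂ s t₂) :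
    LeftInvOn (e₁ ∘ Function.invFunOn e₂ s) (e₂ ∘ Function.invFunOn e₁ s) t₁ := by
  intro x hx
  simp only [Function.comp_apply, h₂.injOn.leftInvOn_invFunOn (h₁.surjOn.mapsTo_invFunOn hx)]
  exact h₁.surjOn.rightInvOn_invFunOn hx

end Set

namespace MeasureTheory

variable {ι α β Ω : Type*} [MeasurableSpace α] [MeasurableSpace Ω]

lemma IsProjectiveLimit.map_comp_equiv_eq (ν : Measure α) [IsProbabilityMeasure ν]
    {μ : Measure (ι → α)} (hμ : IsProjectiveLimit μ fun s : Finset ι => Measure.pi fun _ : s => ν)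
    (e : ι ≃ ι) : μ.map (· ∘ e) = μ := by
  rw [hμ.unique (Measure.isProjectiveLimit_infinitePi fun _ => ν)]
  convert Measure.infinitePi_map_piCongrLeft (fun _ => ν) e.symm using 2
  ext x i
  simp [MeasurableEquiv.coe_piCongrLeft, Equiv.piCongrLeft_apply_eq_cast]

lemma measure_preimage_preimage_comp_of_map_comp_eq [MeasurableSpace β] {μ : Measure (ι → α)}
    {f : (ι → α) → (ι → β)} (hf : Measurable f) (e : ι → ι) (hμ : μ.map (· ∘ e) = μ)
    (hfe : ∀ x, f (x ∘ e) = f x ∘ e) {S : Set (ι → β)} (hS : MeasurableSet S) :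
    μ (f ⁻¹' ((· ∘ e) ⁻¹' S)) = μ (f ⁻¹' S) := by
  conv_rhs => rw [← hμ]
  rw [Measure.map_apply (by fun_prop) (hf hS)]
  congr 1
  ext x
  simp [hfe]

lemma sum_measure_inter_eq_mul (μ : Measure Ω) (s : Finset ι) {B : Set Ω} {C : ι → Set Ω}
    (hB : MeasurableSet B) (hC : ∀ i ∈ s, MeasurableSet (C i)) {k : ℕ}
    (hk : ∀ x ∈ B, {i ∈ (s : Set ι) | x ∈ C i}.ncard = k) :
    ∑ i ∈ s, μ (B ∩ C i) = k * μ B := by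
  classical
  calc ∑ i ∈ s, μ (B ∩ C i) = ∑ i ∈ s, ∫⁻ x in B, (C i).indicator 1 x ∂μ := by
        refine Finset.sum_congr rfl fun i hi => ?_
        rw [lintegral_indicator_one (hC i hi), Measure.restrict_apply (hC i hi), Set.inter_comm]
    _ = ∫⁻ x in B, ∑ i ∈ s, (C i).indicator 1 x ∂μ :=
        (lintegral_finsetSum s fun i hi => measurable_one.indicator (hC i hi)).symm
    _ = ∫⁻ _ in B, (k : ENNReal) ∂μ := by
        refine setLIntegral_congr_fun hB fun x hx => ?_
        have : {i ∈ (s : Set ι) | x ∈ C i} = ↑{i ∈ s | x ∈ C i} := by ext; simp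
        rw [← hk x hx, this, Set.ncard_coe_finset]
        simp only [Set.indicator_apply, Pi.one_apply, Finset.sum_boole]
    _ = k * μ B := setLIntegral_const B _

lemma measure_eq_sum_measure_inter_preimage (μ : Measure Ω) {E : Set Ω} {g : Ω → β}
    (T : Finset β) (hg : ∀ t ∈ T, MeasurableSet (g ⁻¹' {t})) (hE : ∀ x ∈ E, g x ∈ T) :
    μ E = ∑ t ∈ T, μ (E ∩ g ⁻¹' {t}) := by
  rw [← Measure.restrict_apply_superset (s := E) (t := g ⁻¹' T) hE,
    ← sum_measure_preimage_singleton T hg]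
  refine Finset.sum_congr rfl fun t ht => ?_
  rw [Measure.restrict_apply (hg t ht), Set.inter_comm]

end MeasureTheory

namespace SimpleGraph

variable {V : Type*} {G : SimpleGraph V}

lemma dist_le_length_of_mem_support {v x y : V} (p : G.Walk v y) (hx : x ∈ p.support) :
    G.dist v x ≤ p.length := by
  classical
  exact (dist_le (p.takeUntil x hx)).trans (p.length_takeUntil_le_length hx)

lemma IsTree.exists_adj_dist_add_one_eq (hG : G.IsTree) {v x : V} (hx : x ≠ v) :
    ∃ y, G.Adj x y ∧ G.dist v y + 1 = G.dist v x := by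
  obtain ⟨p, -, hp⟩ := hG.connected.exists_path_of_dist v x
  have hnil : ¬p.Nil := fun h => hx h.eq.symm
  have hlen : 0 < p.length := hp ▸ hG.connected.pos_dist_of_ne (Ne.symm hx)
  refine ⟨p.penultimate, (p.adj_penultimate hnil).symm, ?_⟩
  have hle : G.dist v p.penultimate ≤ p.length - 1 := p.length_dropLast ▸ dist_le p.dropLast
  rcases hG.dist_eq_dist_add_one_of_adj v (p.adj_penultimate hnil) with h | h <;> omega

lemma IsTree.eq_of_adj_of_dist_add_one_eq (hG : G.IsTree) {v x y₁ y₂ : V}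
    (h₁ : G.Adj x y₁) (hd₁ : G.dist v y₁ + 1 = G.dist v x)
    (h₂ : G.Adj x y₂) (hd₂ : G.dist v y₂ + 1 = G.dist v x) : y₁ = y₂ := by
  obtain ⟨p, hp, -⟩ := hG.connected.exists_path_of_dist v x
  have key (y : V) (hxy : G.Adj x y) (hd : G.dist v y + 1 = G.dist v x) : y = p.penultimate := by
    obtain ⟨q, hq, hqlen⟩ := hG.connected.exists_path_of_dist v y
    have hxq : x ∉ q.support := fun hx => by
      have := dist_le_length_of_mem_support q hx
      omega
    exact hG.isAcyclic.eq_penultimate_of_adj_end hp hxy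
      (hG.isAcyclic.mem_support_of_ne_mem_support_of_adj_of_isPath hp hq hxy hxq)
  rw [key y₁ h₁ hd₁, key y₂ h₂ hd₂]

variable (G) in
/-- At the root `x = v` this is a junk value. -/
noncomputable def parent (v x : V) : V :=
  haveI : Nonempty V := ⟨v⟩
  Classical.epsilon fun y => G.Adj x y ∧ G.dist v y + 1 = G.dist v x

variable (G) in
def children (v y : V) : Set V := {x | G.Adj y x ∧ G.dist v x = G.dist v y + 1}

lemma children_root (v : V) : G.children v v = G.neighborSet v := by
  ext x
  simp [children, dist_eq_one_iff_adj]

lemma ne_root_of_mem_children {v x y : V} (hx : x ∈ G.children v y) : x ≠ v := by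
  rintro rfl
  simpa using hx.2

lemma IsTree.parent_spec (hG : G.IsTree) {v x : V} (hx : x ≠ v) :
    G.Adj x (G.parent v x) ∧ G.dist v (G.parent v x) + 1 = G.dist v x :=
  haveI : Nonempty V := ⟨v⟩
  Classical.epsilon_spec (hG.exists_adj_dist_add_one_eq hx)

lemma IsTree.mem_children_parent (hG : G.IsTree) {v x : V} (hx : x ≠ v) :
    x ∈ G.children v (G.parent v x) :=
  ⟨(hG.parent_spec hx).1.symm, (hG.parent_spec hx).2.symm⟩

lemma IsTree.parent_eq_of_mem_children (hG : G.IsTree) {v x y : V} (hx : x ∈ G.children v y) :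
    G.parent v x = y :=
  have hxv := ne_root_of_mem_children hx
  hG.eq_of_adj_of_dist_add_one_eq (hG.parent_spec hxv).1 (hG.parent_spec hxv).2 hx.1.symm hx.2.symm

lemma IsTree.neighborSet_eq_insert_parent (hG : G.IsTree) {v x : V} (hx : x ≠ v) :
    G.neighborSet x = insert (G.parent v x) (G.children v x) := by
  ext y
  refine ⟨fun hxy => ?_, ?_⟩
  · rcases hG.dist_eq_dist_add_one_of_adj v hxy with h | h
    · exact Or.inl (hG.eq_of_adj_of_dist_add_one_eq hxy h.symm (hG.parent_spec hx).1
        (hG.parent_spec hx).2)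
    · exact Or.inr ⟨hxy, h⟩
  · rintro (rfl | hy)
    · exact (hG.parent_spec hx).1
    · exact hy.1

lemma IsTree.ncard_children_add_one (hG : G.IsTree) {v x : V} (hx : x ≠ v)
    (hfin : (G.neighborSet x).Finite) :
    (G.children v x).ncard + 1 = (G.neighborSet x).ncard := by
  have hpar : G.parent v x ∉ G.children v x := fun h => by
    have := (hG.parent_spec hx).2
    have := h.2
    omega
  rw [hG.neighborSet_eq_insert_parent hx,
    Set.ncard_insert_of_notMem hpar (hfin.subset fun _ h => h.1)]

variable (G) in
/-- `σ y z` is meant to map the children of `y` bijectively onto those of `z`. -/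
noncomputable def liftChildMaps (v : V) (σ : V → V → V → V) (x : V) : V :=
  go (G.dist v x) x
where
  go : ℕ → V → V
  | 0, x => x
  | n + 1, x => σ (G.parent v x) (go n (G.parent v x)) x

section liftChildMaps

variable {v : V} {σ : V → V → V → V}

@[simp]
lemma liftChildMaps_root : G.liftChildMaps v σ v = v := by
  simp [liftChildMaps, liftChildMaps.go]

lemma IsTree.liftChildMaps_of_ne (hG : G.IsTree) {x : V} (hx : x ≠ v) :
    G.liftChildMaps v σ x = σ (G.parent v x) (G.liftChildMaps v σ (G.parent v x)) x := by
  rw [liftChildMaps, ← (hG.parent_spec hx).2]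
  rfl

variable (hG : G.IsTree)
  (hmaps : ∀ y z, G.dist v y = G.dist v z → Set.MapsTo (σ y z) (G.children v y) (G.children v z))
  (hinv : ∀ y z, G.dist v y = G.dist v z → Set.LeftInvOn (σ z y) (σ y z) (G.children v y))
include hG hmaps hinv

lemma IsTree.liftChildMaps_spec (x : V) :
    G.dist v (G.liftChildMaps v σ x) = G.dist v x ∧
    G.liftChildMaps v σ (G.liftChildMaps v σ x) = x ∧
    (x ≠ v → G.liftChildMaps v σ x ∈ G.children v (G.liftChildMaps v σ (G.parent v x))) := by
  induction hn : G.dist v x using Nat.strong_induction_on generalizing x with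
  | _ n ih =>
    by_cases hx : x = v
    · subst hx
      simp_all
    have hrec : ∀ x, x ≠ v → G.liftChildMaps v σ x
        = σ (G.parent v x) (G.liftChildMaps v σ (G.parent v x)) x :=
      fun x hx => hG.liftChildMaps_of_ne hx
    have hxy : x ∈ G.children v (G.parent v x) := hG.mem_children_parent hx
    set φ := G.liftChildMaps v σ
    set y := G.parent v x
    obtain ⟨hdy, hφφy, -⟩ := ih _ (by rw [← hn, hxy.2]; omega) y rfl
    have hφx : φ x ∈ G.children v (φ y) := by
      rw [hrec x hx]
      exact hmaps y (φ y) hdy.symm hxy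
    refine ⟨by rw [← hn, hφx.2, hdy, hxy.2], ?_, fun _ => hφx⟩
    rw [hrec _ (ne_root_of_mem_children hφx), hG.parent_eq_of_mem_children hφx, hφφy, hrec x hx]
    exact hinv y (φ y) hdy.symm hxy

lemma IsTree.liftChildMaps_involutive : Function.Involutive (G.liftChildMaps v σ) :=
  fun x => (hG.liftChildMaps_spec hmaps hinv x).2.1

lemma IsTree.liftChildMaps_adj {a b : V} (hab : G.Adj a b) :
    G.Adj (G.liftChildMaps v σ a) (G.liftChildMaps v σ b) := by
  have hchild : ∀ {a b}, b ∈ G.children v a →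
      G.Adj (G.liftChildMaps v σ a) (G.liftChildMaps v σ b) := fun {a b} hb => by
    have := (hG.liftChildMaps_spec hmaps hinv b).2.2 (ne_root_of_mem_children hb)
    rw [hG.parent_eq_of_mem_children hb] at this
    exact this.1
  rcases hG.dist_eq_dist_add_one_of_adj v hab with h | h
  · exact (hchild ⟨hab.symm, h⟩).symm
  · exact hchild ⟨hab, h⟩

noncomputable def IsTree.liftChildMapsIso : G ≃g G where
  toEquiv := (hG.liftChildMaps_involutive hmaps hinv).toPerm
  map_rel_iff' {a b} := by
    refine ⟨fun h => ?_, hG.liftChildMaps_adj hmaps hinv⟩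
    simpa only [Function.Involutive.coe_toPerm, hG.liftChildMaps_involutive hmaps hinv _]
      using hG.liftChildMaps_adj hmaps hinv h

@[simp]
lemma IsTree.liftChildMapsIso_apply (x : V) :
    hG.liftChildMapsIso hmaps hinv x = G.liftChildMaps v σ x := rfl

end liftChildMaps

lemma swap_mapsTo_neighborSet [DecidableEq V] {v u w : V} (hu : G.Adj v u) (hw : G.Adj v w) :
    Set.MapsTo (Equiv.swap u w) (G.neighborSet v) (G.neighborSet v) := fun x hx => by
  rw [Equiv.swap_apply_def]
  split_ifs <;> assumption

section Regular

variable {r : ℕ} (hG : G.IsTree) (hr : r ≠ 0) (hreg : ∀ x, (G.neighborSet x).ncard = r)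
include hG hr hreg

lemma IsTree.exists_bijOn_children {v y : V} (hy : y ≠ v) :
    ∃ e : ℕ → V, Set.BijOn e (Finset.range (r - 1)) (G.children v y) := by
  have hfin : (G.neighborSet y).Finite := Set.finite_of_ncard_ne_zero ((hreg y).symm ▸ hr)
  have hcard := hG.ncard_children_add_one hy hfin
  have : Nonempty V := ⟨v⟩
  refine (Finset.range (r - 1)).finite_toSet.exists_bijOn_of_encard_eq ?_
  rw [Set.encard_coe_eq_coe_finsetCard, Finset.card_range,
    ← (hfin.subset fun _ h => h.1).cast_ncard_eq]
  have := hreg y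
  congr 1
  omega

theorem IsTree.exists_iso_apply_eq_of_adj {v u w : V} (hu : G.Adj v u) (hw : G.Adj v w) :
    ∃ φ : G ≃g G, φ v = v ∧ φ w = u := by
  classical
  have henum (y : V) : ∃ e : ℕ → V,
      y ≠ v → Set.BijOn e (Finset.range (r - 1)) (G.children v y) := by
    by_cases hy : y = v
    · exact ⟨fun _ => v, (absurd hy ·)⟩
    · obtain ⟨e, he⟩ := hG.exists_bijOn_children hr hreg hy
      exact ⟨e, fun _ => he⟩
  choose e he using henum
  -- Enumerating all non-root children sets by the same index set makes the transfer maps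
  -- `e z ∘ (e y)⁻¹` and `e y ∘ (e z)⁻¹` mutually inverse.
  let σ : V → V → V → V := fun y z =>
    if y = v then Equiv.swap u w else e z ∘ Function.invFunOn (e y) (Finset.range (r - 1))
  have hroot (y z : V) (hyz : G.dist v y = G.dist v z) (hy : y = v) : z = v := by
    subst hy
    exact (hG.connected.dist_eq_zero_iff.mp (by simpa using hyz.symm)).symm
  have hmaps (y z : V) (hyz : G.dist v y = G.dist v z) :
      Set.MapsTo (σ y z) (G.children v y) (G.children v z) := by
    by_cases hy : y = v
    · obtain rfl := hroot y z hyz hy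
      simpa [σ, hy, children_root] using swap_mapsTo_neighborSet hu hw
    have hz : z ≠ v := fun hz => hy (hroot z y hyz.symm hz)
    simpa [σ, hy] using (he y hy).mapsTo_comp_invFunOn (he z hz)
  have hinv (y z : V) (hyz : G.dist v y = G.dist v z) :
      Set.LeftInvOn (σ z y) (σ y z) (G.children v y) := by
    by_cases hy : y = v
    · obtain rfl := hroot y z hyz hy
      simp only [σ, hy, if_true]
      exact fun x _ => Equiv.swap_apply_self u w x
    have hz : z ≠ v := fun hz => hy (hroot z y hyz.symm hz)
    simpa [σ, hy, hz] using (he y hy).leftInvOn_comp_invFunOn (he z hz)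
  refine ⟨hG.liftChildMapsIso hmaps hinv, by simp, ?_⟩
  have hwv : w ∈ G.children v v := (children_root v).symm ▸ hw
  rw [IsTree.liftChildMapsIso_apply, hG.liftChildMaps_of_ne (ne_root_of_mem_children hwv),
    hG.parent_eq_of_mem_children hwv, liftChildMaps_root]
  simp [σ]

end Regular

end SimpleGraph

section typeOf

variable {V W : Type} {p : ℕ} {G : SimpleGraph V}

lemma measurableSet_remains (v : V) : MeasurableSet {ℓ : V → Option (Fin p) | remains ℓ v} :=
  show MeasurableSet ((fun ℓ : V → Option (Fin p) => ℓ v) ⁻¹' {none}) from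
    measurable_pi_apply v MeasurableSpace.measurableSet_top

lemma typeOf_congr {ℓ ℓ' : V → Option (Fin p)} {v : V}
    (h : ∀ b ∈ G.neighborSet v, ℓ b = ℓ' b) : typeOf G ℓ v = typeOf G ℓ' v := by
  simp only [typeOf]
  congr 1
  · congr 1
    ext b
    exact and_congr_right fun hb => by rw [h b hb]
  · congr 1
    ext i
    exact forall₂_congr fun b hb => by rw [h b hb]

lemma typeOf_comp_iso {G' : SimpleGraph W} (φ : G ≃g G') (ℓ : W → Option (Fin p)) (v : V) :
    typeOf G (ℓ ∘ φ) v = typeOf G' ℓ (φ v) := by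
  have hN (a : V) : a ∈ G.neighborSet v ↔ φ a ∈ G'.neighborSet (φ v) := φ.map_adj_iff.symm
  simp only [typeOf]
  congr 1
  · rw [← Set.ncard_preimage_of_injective_subset_range φ.injective (by simp)]
    congr 1
    ext a
    simp [hN]
  · congr 1
    ext i
    rw [Set.mem_ofPred, Set.mem_ofPred, φ.surjective.forall]
    simp [hN]

lemma measurable_typeOf {v : V} (hv : (G.neighborSet v).Finite) :
    Measurable fun ℓ : V → Option (Fin p) => typeOf G ℓ v := by
  classical
  let s := hv.toFinset
  let extend : (s → Option (Fin p)) → V → Option (Fin p) :=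
    fun g b => if h : b ∈ s then g ⟨b, h⟩ else none
  have : (fun ℓ : V → Option (Fin p) => typeOf G ℓ v)
      = (fun g => typeOf G (extend g) v) ∘ s.restrict :=
    funext fun ℓ => typeOf_congr fun b hb => by
      have hbs : b ∈ s := hv.mem_toFinset.mpr hb
      simp [extend, hbs, Finset.restrict]
  rw [this]
  exact (measurable_of_finite _).comp (Finset.measurable_restrict s)

lemma typeOf_mem_range_product {v : V} (hv : (G.neighborSet v).Finite)
    (ℓ : V → Option (Fin p)) :
    typeOf G ℓ v ∈ Finset.range ((G.neighborSet v).ncard + 1) ×ˢ Finset.range (p + 1) := by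
  simp only [Finset.mem_product, Finset.mem_range, Nat.lt_succ_iff]
  exact ⟨Set.ncard_le_ncard (Set.sep_subset _ _) hv,
    (Set.ncard_le_card _).trans (Nat.card_fin p).le⟩

end typeOf

namespace SimpleGraph

variable {V : Type} {α : Type*} [MeasurableSpace α] {p r : ℕ} {G : SimpleGraph V}
  {μ : Measure (V → α)} {f : (V → α) → V → Option (Fin p)}

lemma measure_remains_remains_eq_sum (hf : Measurable f) {u v : V}
    (hv : (G.neighborSet v).Finite) :
    μ {x | remains (f x) u ∧ remains (f x) v}
      = ∑ t ∈ Finset.range ((G.neighborSet v).ncard + 1) ×ˢ Finset.range (p + 1),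
          μ {x | remains (f x) v ∧ typeOf G (f x) v = t ∧ remains (f x) u} := by
  rw [measure_eq_sum_measure_inter_preimage μ (g := fun x => typeOf G (f x) v) _
    (fun t _ => (measurable_typeOf hv).comp hf (measurableSet_singleton t))
    (fun x _ => typeOf_mem_range_product hv (f x))]
  refine Finset.sum_congr rfl fun t _ => congrArg μ (Set.ext fun _ => ?_)
  exact ⟨fun ⟨⟨hru, hrv⟩, ht⟩ => ⟨hrv, ht, hru⟩, fun ⟨hrv, ht, hru⟩ => ⟨⟨hru, hrv⟩, ht⟩⟩

variable (hG : G.IsTree) (hr : r ≠ 0) (hreg : ∀ x, (G.neighborSet x).ncard = r)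
  (hμ : ∀ φ : G ≃g G, μ.map (· ∘ φ) = μ) (hf : Measurable f)
  (hfφ : ∀ (φ : G ≃g G) x, f (x ∘ φ) = f x ∘ φ)
include hG hr hreg hμ hf hfφ

lemma IsTree.measure_remains_typeOf_remains_eq {v u w : V} (hu : G.Adj v u) (hw : G.Adj v w)
    (t : ℕ × ℕ) :
    μ {x | remains (f x) v ∧ typeOf G (f x) v = t ∧ remains (f x) w}
      = μ {x | remains (f x) v ∧ typeOf G (f x) v = t ∧ remains (f x) u} := by
  obtain ⟨φ, hφv, hφu⟩ := hG.exists_iso_apply_eq_of_adj hr hreg hw hu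
  have hfin : (G.neighborSet v).Finite := Set.finite_of_ncard_ne_zero ((hreg v).symm ▸ hr)
  have hS : MeasurableSet
      {ℓ : V → Option (Fin p) | remains ℓ v ∧ typeOf G ℓ v = t ∧ remains ℓ u} :=
    (measurableSet_remains v).inter
      ((measurable_typeOf hfin (measurableSet_singleton t)).inter (measurableSet_remains u))
  refine Eq.trans ?_ (measure_preimage_preimage_comp_of_map_comp_eq hf φ (hμ φ) (hfφ φ) hS)
  congr 1
  ext x
  simp [remains, typeOf_comp_iso, hφv, hφu]

lemma IsTree.natCast_mul_measure_remains_typeOf_remains {u v : V} (huv : G.Adj u v)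
    (t : ℕ × ℕ) :
    r * μ {x | remains (f x) v ∧ typeOf G (f x) v = t ∧ remains (f x) u}
      = t.1 * μ {x | remains (f x) v ∧ typeOf G (f x) v = t} := by
  have hfin : (G.neighborSet v).Finite := Set.finite_of_ncard_ne_zero ((hreg v).symm ▸ hr)
  have hB : MeasurableSet {x | remains (f x) v ∧ typeOf G (f x) v = t} :=
    hf ((measurableSet_remains v).inter (measurable_typeOf hfin (measurableSet_singleton t)))
  have hcount := sum_measure_inter_eq_mul μ hfin.toFinset hB
    (C := fun w => {x | remains (f x) w}) (fun w _ => hf (measurableSet_remains w))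
    (k := t.1) fun x hx => by rw [hfin.coe_toFinset]; exact congrArg Prod.fst hx.2
  rw [← hcount, Finset.sum_congr rfl fun w hw => ?_, Finset.sum_const,
    ← Set.ncard_eq_toFinset_card _ hfin, hreg, nsmul_eq_mul]
  rw [← hG.measure_remains_typeOf_remains_eq hr hreg hμ hf hfφ huv.symm
    (hfin.mem_toFinset.mp hw) t]
  exact congrArg μ (Set.ext fun x => and_assoc)

end SimpleGraph

open SimpleGraph in
theorem step_lemma_type_probabilities_general
    (r p : ℕ) (hr : 3 ≤ r)
    (V : Type)
    (G : SimpleGraph V) (hconn : G.Connected) (hacyc : G.IsAcyclic)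
    (hreg : ∀ v : V, (G.neighborSet v).ncard = r)
    (μ : Measure (V → ℝ))
    (hμ : ∀ s : Finset V,
      Measure.map (fun (x : V → ℝ) (v : s) => x v) μ
        = Measure.pi (fun _ : s => volume.restrict (Set.Icc (0:ℝ) 1)))
    (f : (V → ℝ) → (V → Option (Fin p)))
    (hf : Measurable f)
    (heq : ∀ (φ : G ≃g G) (x : V → ℝ) (v : V),
      f (fun w => x (φ.symm w)) v = f x (φ.symm v))
    (u v : V) (huv : G.Adj u v)
    (d c : ℕ) :
    μ {x | remains (f x) v ∧ typeOf G (f x) v = (d, c) ∧ remains (f x) u}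
        = ((d : ENNReal) / (r : ENNReal))
            * μ {x | remains (f x) v ∧ typeOf G (f x) v = (d, c)} ∧
    (0 < μ {x | remains (f x) u ∧ remains (f x) v} →
      μ {x | remains (f x) v ∧ typeOf G (f x) v = (d, c) ∧ remains (f x) u}
          / μ {x | remains (f x) u ∧ remains (f x) v}
        = ((d : ENNReal) * μ {x | remains (f x) v ∧ typeOf G (f x) v = (d, c)})
            / ∑ d' ∈ Finset.range (r + 1), ∑ c' ∈ Finset.range (p + 1),
                (d' : ENNReal)
                  * μ {x | remains (f x) v ∧ typeOf G (f x) v = (d', c')}) := by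
  have hG : G.IsTree := ⟨hconn, hacyc⟩
  have hr0 : r ≠ 0 := by omega
  have hrE : (r : ENNReal) ≠ 0 := by exact_mod_cast hr0
  have : IsProbabilityMeasure (volume.restrict (Set.Icc (0 : ℝ) 1)) := ⟨by simp⟩
  have hμφ (φ : G ≃g G) : μ.map (· ∘ φ) = μ := IsProjectiveLimit.map_comp_equiv_eq _ hμ φ.toEquiv
  have hfφ (φ : G ≃g G) (x : V → ℝ) : f (x ∘ φ) = f x ∘ φ := funext (heq φ.symm x)
  have hA (t : ℕ × ℕ) : μ {x | remains (f x) v ∧ typeOf G (f x) v = t ∧ remains (f x) u}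
      = t.1 * μ {x | remains (f x) v ∧ typeOf G (f x) v = t} * (r : ENNReal)⁻¹ := by
    rw [← hG.natCast_mul_measure_remains_typeOf_remains hr0 hreg hμφ hf hfφ huv, mul_comm,
      ← mul_assoc, ENNReal.inv_mul_cancel hrE (by simp), one_mul]
  refine ⟨by rw [hA, ENNReal.div_eq_inv_mul]; ring, fun _ => ?_⟩
  have hfin : (G.neighborSet v).Finite := Set.finite_of_ncard_ne_zero ((hreg v).symm ▸ hr0)
  rw [measure_remains_remains_eq_sum hf hfin, hreg v]
  simp_rw [hA, ← Finset.sum_mul, Finset.sum_product]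
  exact ENNReal.mul_div_mul_right _ _ (ENNReal.inv_ne_zero.mpr (by simp))
    (ENNReal.inv_ne_top.mpr hrE)

/-- **Lemma (step lemma).** For any fiid partial labelling `f` of the `r`-regular tree,
adjacent vertices `u ∼ v`, and type `(d, c)` with `1 ≤ d ≤ r`, `c ≤ p`:
`μ {v remains with type (d,c), and u remains} = (d/r) · μ {v remains with type (d,c)}`.
In particular, conditioned on both `u` and `v` remaining, the probability that `v` has type
`(d,c)` is proportional to `d · μ {v remains with type (d,c)}`. -/
theorem step_lemma_type_probabilities
    (r p : ℕ) (hr : 3 ≤ r) (hp : 1 ≤ p)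
    (V : Type) [Countable V] [Infinite V]
    (G : SimpleGraph V) (hconn : G.Connected) (hacyc : G.IsAcyclic)
    (hreg : ∀ v : V, (G.neighborSet v).ncard = r)
    (μ : Measure (V → ℝ)) [IsProbabilityMeasure μ]
    (hμ : ∀ s : Finset V,
      Measure.map (fun (x : V → ℝ) (v : s) => x v) μ
        = Measure.pi (fun _ : s => volume.restrict (Set.Icc (0:ℝ) 1)))
    (f : (V → ℝ) → (V → Option (Fin p)))
    (hf : Measurable f)
    (heq : ∀ (φ : G ≃g G) (x : V → ℝ) (v : V),
      f (fun w => x (φ.symm w)) v = f x (φ.symm v))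
    (u v : V) (huv : G.Adj u v)
    (d c : ℕ) (hd1 : 1 ≤ d) (hdr : d ≤ r) (hcp : c ≤ p) :
    μ {x | remains (f x) v ∧ typeOf G (f x) v = (d, c) ∧ remains (f x) u}
        = ((d : ENNReal) / (r : ENNReal))
            * μ {x | remains (f x) v ∧ typeOf G (f x) v = (d, c)} ∧
    (0 < μ {x | remains (f x) u ∧ remains (f x) v} →
      μ {x | remains (f x) v ∧ typeOf G (f x) v = (d, c) ∧ remains (f x) u}
          / μ {x | remains (f x) u ∧ remains (f x) v}
        = ((d : ENNReal) * μ {x | remains (f x) v ∧ typeOf G (f x) v = (d, c)})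
            / ∑ d' ∈ Finset.range (r + 1), ∑ c' ∈ Finset.range (p + 1),
                (d' : ENNReal)
                  * μ {x | remains (f x) v ∧ typeOf G (f x) v = (d', c')}) :=
  step_lemma_type_probabilities_general r p hr V G hconn hacyc hreg μ hμ f hf heq u v huv d c
end

section
/- Let E = EuclideanSpace ℝ (Fin m), let F : E → E be Lipschitz with constant L, let K ≥ 0, let z₀ ∈ E, and let σ : ℝ → E satisfy σ(0) = z₀ and have derivative F(σ(x)) at every x ∈ ℝ. Then for every δ > 0 and every R > 0 there exists ε₀ > 0 such that: for every ε with 0 < ε ≤ ε₀ and every sequence z : ℕ → E with z(0) = z₀ and ‖z(i+1) − z(i) − ε • F(z(i))‖ ≤ K·ε² for all i, one has ‖z(n) − σ(ε·n)‖ ≤ δ for every n ∈ ℕ with ε·n ≤ R. (Trajectory Lemma: sequences satisfying the difference equation up to O(ε²) error stay close to the solution of the corresponding differential equation.) -/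
open Set

lemma mvt_aux {m : ℕ} {f f' : ℝ → EuclideanSpace ℝ (Fin m)} {a b : ℝ} (hab : a ≤ b)
    (hf : ∀ t ∈ Icc a b, HasDerivAt f (f' t) t)
    {v : EuclideanSpace ℝ (Fin m)} {C : ℝ}
    (hC : ∀ t ∈ Icc a b, ‖f' t - v‖ ≤ C) :
    ‖f b - f a - (b - a) • v‖ ≤ C * (b - a) := by
  have := Convex.norm_image_sub_le_of_norm_hasFDerivWithin_le'
      (f := f) (f' := fun t => ContinuousLinearMap.smulRight (1 : ℝ →L[ℝ] ℝ) (f' t))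
      (φ := ContinuousLinearMap.smulRight (1 : ℝ →L[ℝ] ℝ) v) (s := Icc a b)
      (fun t ht => (hf t ht).hasFDerivAt.hasFDerivWithinAt)
      (fun t ht => by
        have heq : ContinuousLinearMap.smulRight (1 : ℝ →L[ℝ] ℝ) (f' t)
            - ContinuousLinearMap.smulRight (1 : ℝ →L[ℝ] ℝ) v
            = ContinuousLinearMap.smulRight (1 : ℝ →L[ℝ] ℝ) (f' t - v) := by
          ext x; simp [smul_sub]
        rw [heq, ContinuousLinearMap.norm_smulRight_apply]
        simpa using hC t ht)
      (convex_Icc a b) (left_mem_Icc.2 hab) (right_mem_Icc.2 hab)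
  simpa [abs_of_nonneg (sub_nonneg.2 hab)] using this

set_option maxHeartbeats 1000000 in
/-- **Trajectory Lemma.** Let `F : E → E` be Lipschitz with constant `L` on
`E = EuclideanSpace ℝ (Fin m)`, and let `σ` solve `σ' = F ∘ σ` with `σ 0 = z₀`. Then for
every `δ > 0` and `R > 0` there is an `ε₀ > 0` such that any sequence `z` with `z 0 = z₀`
satisfying the difference equation `z (i+1) = z i + ε • F (z i)` up to error `K·ε²`
(for `0 < ε ≤ ε₀`) stays within `δ` of `σ (ε·n)` for all `n` with `ε·n ≤ R`. -/
theorem trajectory_lemma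
    (m : ℕ) (F : EuclideanSpace ℝ (Fin m) → EuclideanSpace ℝ (Fin m))
    (L : ℝ) (hF : ∀ a b, ‖F a - F b‖ ≤ L * ‖a - b‖)
    (K : ℝ) (hK : 0 ≤ K)
    (z₀ : EuclideanSpace ℝ (Fin m))
    (σ : ℝ → EuclideanSpace ℝ (Fin m))
    (hσ0 : σ 0 = z₀)
    (hσ : ∀ x : ℝ, HasDerivAt σ (F (σ x)) x)
    (δ R : ℝ) (hδ : 0 < δ) (hR : 0 < R) :
    ∃ ε₀ > 0, ∀ ε : ℝ, 0 < ε → ε ≤ ε₀ →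
      ∀ z : ℕ → EuclideanSpace ℝ (Fin m), z 0 = z₀ →
        (∀ i : ℕ, ‖z (i + 1) - z i - ε • F (z i)‖ ≤ K * ε ^ 2) →
        ∀ n : ℕ, ε * n ≤ R → ‖z n - σ (ε * n)‖ ≤ δ := by
  set L' := max L 1 with hL'def
  have hL1 : (1:ℝ) ≤ L' := le_max_right _ _
  have hL0 : (0:ℝ) < L' := lt_of_lt_of_le one_pos hL1
  have hF' : ∀ a b, ‖F a - F b‖ ≤ L' * ‖a - b‖ := fun a b =>
    (hF a b).trans (mul_le_mul_of_nonneg_right (le_max_left _ _) (norm_nonneg _))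
  -- continuity
  have hσc : Continuous σ := continuous_iff_continuousAt.2 fun x => (hσ x).continuousAt
  have hFc : Continuous F := by
    have : LipschitzWith (Real.toNNReal L') F := by
      apply LipschitzWith.of_dist_le_mul
      intro a b
      simpa [dist_eq_norm, Real.coe_toNNReal _ hL0.le] using hF' a b
    exact this.continuous
  -- bound on ‖F ∘ σ‖ over [0, R]
  obtain ⟨t₀, ht₀, hM⟩ := isCompact_Icc.exists_isMaxOn (nonempty_Icc.2 hR.le)
    ((hFc.comp hσc).norm.continuousOn : ContinuousOn (fun t => ‖F (σ t)‖) (Icc 0 R))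
  set M := ‖F (σ t₀)‖ with hMdef
  have hM0 : (0:ℝ) ≤ M := norm_nonneg _
  -- σ is M-Lipschitz on [0,R]
  have hσLip : ∀ s ∈ Icc (0:ℝ) R, ∀ t ∈ Icc (0:ℝ) R, ‖σ t - σ s‖ ≤ M * ‖t - s‖ := by
    intro s hs t ht
    exact Convex.norm_image_sub_le_of_norm_hasDerivWithin_le
      (f' := fun t => F (σ t))
      (fun x _ => (hσ x).hasDerivWithinAt) (fun x hx => hM hx) (convex_Icc 0 R) hs ht
  set C := K + L' * M + 1 with hCdef
  have hC : (0:ℝ) < C := by positivity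
  refine ⟨min 1 (δ * L' / (C * Real.exp (L' * R))), by positivity, ?_⟩
  intro ε hε hεle z hz0 hz
  have hε1 : ε ≤ 1 := hεle.trans (min_le_left _ _)
  have hε2 : ε * (C * Real.exp (L' * R)) ≤ δ * L' := by
    have := hεle.trans (min_le_right _ _)
    rw [le_div_iff₀ (by positivity)] at this
    linarith
  -- main induction
  have key : ∀ n : ℕ, ε * n ≤ R →
      ‖z n - σ (ε * n)‖ ≤ C * ε * ((1 + ε * L') ^ n - 1) / L' := by
    intro n
    induction n with
    | zero => intro _; simp [hz0, hσ0]
    | succ n ih =>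
      intro hb
      have hcast : (↑(n+1) : ℝ) = (n : ℝ) + 1 := by push_cast; ring
      have hnn : (0:ℝ) ≤ (n:ℝ) := Nat.cast_nonneg n
      have ha0 : 0 ≤ ε * n := by positivity
      have hab : ε * n ≤ ε * ((n:ℝ) + 1) := by nlinarith
      have ha : ε * n ≤ R := le_trans hab (by rw [← hcast]; exact hb)
      have hb' : ε * ((n:ℝ)+1) ≤ R := by rw [← hcast]; exact hb
      have IH := ih ha
      set a := ε * (n:ℝ) with hadef
      set b := ε * ((n:ℝ)+1) with hbdef
      have hba : b - a = ε := by rw [hadef, hbdef]; ring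
      have haI : a ∈ Icc (0:ℝ) R := ⟨ha0, ha⟩
      have hsub : Icc a b ⊆ Icc (0:ℝ) R := Icc_subset_Icc ha0 hb'
      -- one-step estimate for σ
      have h3 : ‖σ b - σ a - ε • F (σ a)‖ ≤ L' * (M * ε) * ε := by
        have := mvt_aux (f := σ) (f' := fun t => F (σ t)) (a := a) (b := b)
          (by rw [hadef, hbdef]; nlinarith)
          (fun t _ => hσ t) (v := F (σ a)) (C := L' * (M * ε))
          (fun t ht => by
            have h1 := hF' (σ t) (σ a)
            have h2 := hσLip a haI t (hsub ht)
            have h4 : ‖t - a‖ ≤ ε := by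
              rw [Real.norm_eq_abs, abs_of_nonneg (by linarith [ht.1])]
              linarith [ht.2, hba]
            calc ‖F (σ t) - F (σ a)‖ ≤ L' * ‖σ t - σ a‖ := h1
              _ ≤ L' * (M * ‖t - a‖) := by
                    have := hL0.le
                    gcongr
              _ ≤ L' * (M * ε) := by
                    have := hL0.le
                    gcongr)
        rw [hba] at this
        exact this
      -- decomposition
      have hdec : z (n+1) - σ b =
          (z (n+1) - z n - ε • F (z n)) + (z n - σ a)
          + ε • (F (z n) - F (σ a)) - (σ b - σ a - ε • F (σ a)) := by
        module
      have hstep : ‖z (n+1) - σ b‖ ≤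
          (1 + ε * L') * ‖z n - σ a‖ + C * ε ^ 2 := by
        have e1 := hz n
        have e2 : ‖ε • (F (z n) - F (σ a))‖ ≤ ε * (L' * ‖z n - σ a‖) := by
          rw [norm_smul, Real.norm_eq_abs, abs_of_nonneg hε.le]
          exact mul_le_mul_of_nonneg_left (hF' _ _) hε.le
        calc ‖z (n+1) - σ b‖
            ≤ ‖(z (n+1) - z n - ε • F (z n)) + (z n - σ a) + ε • (F (z n) - F (σ a))‖
              + ‖σ b - σ a - ε • F (σ a)‖ := by rw [hdec]; exact norm_sub_le _ _
          _ ≤ (‖z (n+1) - z n - ε • F (z n)‖ + ‖z n - σ a‖ + ‖ε • (F (z n) - F (σ a))‖)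
              + ‖σ b - σ a - ε • F (σ a)‖ := by
                gcongr
                exact norm_add₃_le
          _ ≤ (1 + ε * L') * ‖z n - σ a‖ + C * ε ^ 2 := by
                rw [hCdef]; nlinarith [e1, e2, h3]
      have hpos : (0:ℝ) < 1 + ε * L' := by positivity
      have : ‖z (n+1) - σ b‖ ≤ C * ε * ((1 + ε * L') ^ (n+1) - 1) / L' := by
        have hrec : (1 + ε * L') * (C * ε * ((1 + ε * L') ^ n - 1) / L') + C * ε ^ 2
            = C * ε * ((1 + ε * L') ^ (n+1) - 1) / L' := by
          field_simp
          ring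
        calc ‖z (n+1) - σ b‖ ≤ (1 + ε * L') * ‖z n - σ a‖ + C * ε ^ 2 := hstep
          _ ≤ (1 + ε * L') * (C * ε * ((1 + ε * L') ^ n - 1) / L') + C * ε ^ 2 := by
              gcongr
          _ = _ := hrec
      rw [hbdef, ← hcast] at this
      exact this
  -- conclusion
  intro n hn
  have hnn : (0:ℝ) ≤ (n:ℝ) := Nat.cast_nonneg n
  have hpow : (1 + ε * L') ^ n ≤ Real.exp (L' * R) := by
    calc (1 + ε * L') ^ n ≤ (Real.exp (ε * L')) ^ n := by
          apply pow_le_pow_left₀ (by positivity)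
          linarith [Real.add_one_le_exp (ε * L')]
      _ = Real.exp ((n:ℝ) * (ε * L')) := (Real.exp_nat_mul _ n).symm
      _ ≤ Real.exp (L' * R) := by
          apply Real.exp_le_exp.2
          nlinarith
  calc ‖z n - σ (ε * n)‖ ≤ C * ε * ((1 + ε * L') ^ n - 1) / L' := key n hn
    _ ≤ C * ε * Real.exp (L' * R) / L' := by
        have h5 : (1 + ε * L') ^ n - 1 ≤ Real.exp (L' * R) := by linarith
        have h6 : (0:ℝ) ≤ C * ε := by positivity
        gcongr
    _ ≤ δ := by
        rw [div_le_iff₀ hL0]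
        nlinarith
end
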